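/- Let λ₁ ≤ λ₂ ≤ … ≤ λₙ be positive integers, N = λ₁+…+λₙ, μᵢ = λ₁+…+λ_{i−1}; for p ∈ {1,…,N} let b(p) be the unique index with μ_{b(p)} < p ≤ μ_{b(p)}+λ_{b(p)}, r(p) = p − μ_{b(p)}, and x(p) = (λ_{b(p)}+1)/2 − r(p). For p ≠ q set γ(p,q) = x(p) − x(q) and γ•(p,q) = (if b(p) = m then x(p) else 0) − (if b(q) = m then x(q) else 0) where m = max(b(p), b(q)), and let c[t] = 12t(t−1) + 2. Then Σ_{(p,q): p≠q, γ(p,q)>0} c[γ(p,q)] − (1/2)·Σ_{(p,q): p≠q, γ(p,q)=1/2} c[γ(p,q)] = Σ_{(p,q): p≠q, γ•(p,q)>0} c[γ(p,q)] − (1/2)·Σ_{(p,q): p≠q, γ•(p,q)=1/2} c[γ(p,q)]. -/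

import Mathlib

/-!
With `ghostWeight s = [s > 0] - ½ [s = ½]`, the two sides are the sums of
`ghostWeight (γ pq) * c (γ pq)` and of `ghostWeight (γ• pq) * c (γ pq)` over ordered pairs of
positions, so it suffices that `(ghostWeight γ - ghostWeight γ•) * c γ` sums to zero. Inside one
block `γ• = γ`. For blocks `i < j`, with Weyl coordinates `u` of the smaller block and `v` of the
larger one, the two orderings of a pair contribute `crossDefect u v`. The smaller block's
coordinates are symmetric under `u ↦ -u`, and expanding the quadratic `c` turns
`∑ᵥ (crossDefect u v + crossDefect (-u) v)` into `S u + S (-u) - 2 S 0 - 24 u² (λⱼ - 1)`, where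
`S u = ∑ᵥ g (v + u)` is `shiftedChargeSum` and `g` is the even `symmGhostCharge`. This vanishes as
`S u = S 0 + 12 u² (λⱼ - 1)` whenever `2u` is an integer with `|2u| < λⱼ`: shifting `u` by `1`
changes `S u` by two boundary terms, which reduces everything to `u = 0` and `u = ½`.
-/

open Finset

theorem sum_offDiag_eq_sum_product {α M : Type*} [DecidableEq α] [AddCommMonoid M]
    (s : Finset α) {f : α × α → M} (hf : ∀ a, f (a, a) = 0) :
    ∑ x ∈ s.offDiag, f x = ∑ x ∈ s ×ˢ s, f x := by
  rw [← diag_union_offDiag, sum_union (disjoint_diag_offDiag s),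
    sum_eq_zero (s := s.diag) fun x hx => ?_, zero_add]
  obtain ⟨-, hx⟩ := mem_diag.mp hx
  rw [← Prod.mk.eta (p := x), ← hx, hf]

theorem sum_sum_eq_zero_of_add_swap {ι R : Type*} [Fintype ι] [Ring R] [NoZeroDivisors R]
    [CharZero R] (G : ι → ι → R) (hG : ∀ i j, G i j + G j i = 0) : ∑ i, ∑ j, G i j = 0 := by
  have h : (∑ i, ∑ j, G i j) + ∑ i, ∑ j, G j i = 0 := by
    rw [← sum_add_distrib]
    exact sum_eq_zero fun i _ => by rw [← sum_add_distrib]; exact sum_eq_zero fun j _ => hG i j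
  rw [sum_comm (f := fun i j => G j i)] at h
  exact add_self_eq_zero.mp h

def ghostWeight (s : ℚ) : ℚ := (if 0 < s then 1 else 0) - 1 / 2 * (if s = 1 / 2 then 1 else 0)

def ghostCharge (t : ℚ) : ℚ := 12 * t * (t - 1) + 2

def symmGhostCharge (t : ℚ) : ℚ :=
  ghostWeight t * ghostCharge t + ghostWeight (-t) * ghostCharge (-t)

/-- The coordinate `x p` of the `(i + 1)`-st position `p` of a block of size `b`. -/
def weylCoord (b i : ℕ) : ℚ := ((b : ℚ) - 1) / 2 - i

theorem sum_ghostWeight_mul {α : Type*} (s : Finset α) (g f : α → ℚ) :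
    ∑ a ∈ s, ghostWeight (g a) * f a =
      ∑ a ∈ s.filter (fun a => 0 < g a), f a -
        1 / 2 * ∑ a ∈ s.filter (fun a => g a = 1 / 2), f a := by
  rw [sum_filter, sum_filter, mul_sum, ← sum_sub_distrib]
  refine sum_congr rfl fun a _ => ?_
  unfold ghostWeight
  split_ifs <;> ring

theorem ghostWeight_of_nonpos {s : ℚ} (h : s ≤ 0) : ghostWeight s = 0 := by
  rw [ghostWeight, if_neg h.not_gt, if_neg (by intro; linarith)]
  ring

theorem ghostWeight_of_one_le {s : ℚ} (h : 1 ≤ s) : ghostWeight s = 1 := by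
  rw [ghostWeight, if_pos (by linarith), if_neg (by intro; linarith)]
  ring

theorem symmGhostCharge_neg (t : ℚ) : symmGhostCharge (-t) = symmGhostCharge t := by
  simp [symmGhostCharge, add_comm]

theorem symmGhostCharge_of_one_le {t : ℚ} (h : 1 ≤ t) : symmGhostCharge t = ghostCharge t := by
  simp [symmGhostCharge, ghostWeight_of_one_le h, ghostWeight_of_nonpos (by linarith : -t ≤ 0)]

section WeylSums

variable {M : Type*} [AddCommMonoid M] (h : ℚ → M)

theorem sum_weylCoord_add_two (b : ℕ) :
    ∑ i ∈ range (b + 2), h (weylCoord (b + 2) i) =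
      h ((b + 1) / 2) + h (-((b + 1) / 2)) + ∑ i ∈ range b, h (weylCoord b i) := by
  have hshift : ∀ i : ℕ, weylCoord (b + 2) (i + 1) = weylCoord b i := fun i => by
    simp only [weylCoord]; push_cast; ring
  have hlast : weylCoord (b + 2) (b + 1) = -((b + 1) / 2) := by
    simp only [weylCoord]; push_cast; ring
  have hfirst : weylCoord (b + 2) 0 = (b + 1) / 2 := by
    simp only [weylCoord]; push_cast; ring
  rw [sum_range_succ', sum_range_succ, hlast, hfirst]
  simp only [hshift]
  abel

theorem sum_weylCoord_add_one (b : ℕ) :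
    ∑ i ∈ range b, h (weylCoord b i + 1) + h (-((b - 1) / 2)) =
      ∑ i ∈ range b, h (weylCoord b i) + h ((b + 1) / 2) := by
  calc _ = ∑ i ∈ range (b + 1), h (((b : ℚ) + 1) / 2 - i) := by
        rw [sum_range_succ]
        congr 1
        · exact sum_congr rfl fun i _ => congrArg h (by simp only [weylCoord]; ring)
        · congr 1; ring
    _ = _ := by
        rw [sum_range_succ']
        congr 1
        · exact sum_congr rfl fun i _ => congrArg h (by simp only [weylCoord]; push_cast; ring)
        · simp

theorem sum_weylCoord_neg : ∀ b : ℕ,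
    ∑ i ∈ range b, h (-weylCoord b i) = ∑ i ∈ range b, h (weylCoord b i)
  | 0 => rfl
  | 1 => by simp [weylCoord]
  | b + 2 => by
    rw [sum_weylCoord_add_two (fun t => h (-t)), sum_weylCoord_add_two, neg_neg, add_comm (h _),
      sum_weylCoord_neg b]

end WeylSums

def shiftedChargeSum (b : ℕ) (u : ℚ) : ℚ := ∑ i ∈ range b, symmGhostCharge (weylCoord b i + u)

theorem shiftedChargeSum_neg (b : ℕ) (u : ℚ) : shiftedChargeSum b (-u) = shiftedChargeSum b u := by
  rw [shiftedChargeSum, ← sum_weylCoord_neg (fun t => symmGhostCharge (t + -u))]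
  simp only [← neg_add, symmGhostCharge_neg, shiftedChargeSum]

theorem shiftedChargeSum_add_two (b : ℕ) (u : ℚ) :
    shiftedChargeSum (b + 2) u = symmGhostCharge ((b + 1) / 2 + u) +
      symmGhostCharge (-((b + 1) / 2) + u) + shiftedChargeSum b u :=
  sum_weylCoord_add_two (fun t => symmGhostCharge (t + u)) b

theorem shiftedChargeSum_add_one (b : ℕ) (u : ℚ) :
    shiftedChargeSum b (u + 1) = shiftedChargeSum b u + symmGhostCharge ((b + 1) / 2 + u) -
      symmGhostCharge (-((b - 1) / 2) + u) := by
  have h := sum_weylCoord_add_one (fun t => symmGhostCharge (t + u)) b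
  simp only [add_right_comm _ (1 : ℚ) u] at h
  rw [shiftedChargeSum, shiftedChargeSum, ← h]
  simp only [add_assoc, add_sub_cancel_right]

theorem shiftedChargeSum_add_two_half : ∀ b : ℕ,
    shiftedChargeSum (b + 2) (1 / 2) = shiftedChargeSum (b + 2) 0 + 3 * (b + 1)
  | 0 => by norm_num [shiftedChargeSum, weylCoord, sum_range_succ, symmGhostCharge, ghostWeight,
      ghostCharge]
  | 1 => by norm_num [shiftedChargeSum, weylCoord, sum_range_succ, symmGhostCharge, ghostWeight,
      ghostCharge]
  | b + 2 => by
    have hb : (0 : ℚ) ≤ b := b.cast_nonneg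
    rw [shiftedChargeSum_add_two, shiftedChargeSum_add_two (b + 2) 0,
      shiftedChargeSum_add_two_half b, ← symmGhostCharge_neg (-_ + _),
      ← symmGhostCharge_neg (-_ + 0)]
    push_cast
    rw [symmGhostCharge_of_one_le (by linarith), symmGhostCharge_of_one_le (by linarith),
      symmGhostCharge_of_one_le (by linarith), symmGhostCharge_of_one_le (by linarith)]
    simp only [ghostCharge]
    ring

theorem shiftedChargeSum_natCast_half : ∀ (j : ℕ) {b : ℕ}, j < b →
    shiftedChargeSum b (j / 2) = shiftedChargeSum b 0 + 3 * j ^ 2 * (b - 1)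
  | 0, _, _ => by simp
  | 1, b, hb => by
    obtain ⟨b, rfl⟩ : ∃ c, b = c + 2 := ⟨b - 2, by omega⟩
    push_cast
    rw [shiftedChargeSum_add_two_half]
    ring
  | j + 2, b, hb => by
    have hj : (j : ℚ) + 3 ≤ b := by exact_mod_cast hb
    have hj0 : (0 : ℚ) ≤ j := j.cast_nonneg
    rw [show ((j + 2 : ℕ) : ℚ) / 2 = j / 2 + 1 by push_cast; ring, shiftedChargeSum_add_one,
      shiftedChargeSum_natCast_half j (by omega), ← symmGhostCharge_neg (-_ + _),
      symmGhostCharge_of_one_le (by linarith), symmGhostCharge_of_one_le (by linarith)]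
    simp only [ghostCharge]
    push_cast
    ring

theorem shiftedChargeSum_intCast_half (b : ℕ) (j : ℤ) (hj : |j| < b) :
    shiftedChargeSum b (j / 2) = shiftedChargeSum b 0 + 3 * j ^ 2 * (b - 1) := by
  obtain ⟨k, rfl | rfl⟩ := j.eq_nat_or_neg
  · have hk : k < b := by simpa using hj
    simpa using shiftedChargeSum_natCast_half k hk
  · have hk : k < b := by simpa using hj
    simpa [neg_div, shiftedChargeSum_neg] using shiftedChargeSum_natCast_half k hk

theorem sum_ghostWeight_weylCoord : ∀ {b : ℕ}, 0 < b →
    ∑ i ∈ range b, ghostWeight (weylCoord b i) = ((b : ℚ) - 1) / 2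
  | 1, _ => by simp [weylCoord, ghostWeight]
  | 2, _ => by
    simp only [sum_range_succ, sum_range_zero, weylCoord]
    norm_num [ghostWeight]
  | b + 3, _ => by
    have hb : (0 : ℚ) ≤ b := b.cast_nonneg
    rw [sum_weylCoord_add_two, sum_ghostWeight_weylCoord (by omega : 0 < b + 1),
      ghostWeight_of_one_le (by push_cast; linarith),
      ghostWeight_of_nonpos (by push_cast; linarith)]
    push_cast
    ring

def crossDefect (u v : ℚ) : ℚ :=
  (ghostWeight (u - v) - ghostWeight (-v)) * ghostCharge (u - v) +
    (ghostWeight (v - u) - ghostWeight v) * ghostCharge (v - u)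

theorem crossDefect_add_crossDefect_neg (u v : ℚ) :
    crossDefect u v + crossDefect (-u) v =
      symmGhostCharge (v + u) + symmGhostCharge (v - u) - 2 * symmGhostCharge v -
        24 * u ^ 2 * (ghostWeight v + ghostWeight (-v)) := by
  simp only [crossDefect, symmGhostCharge, ghostCharge, neg_add, ← sub_eq_add_neg,
    sub_neg_eq_add, neg_sub, add_comm v u]
  ring_nf

theorem sum_crossDefect_add_crossDefect_neg (b : ℕ) (j : ℤ) (hj : |j| < b) :
    ∑ l ∈ range b,
      (crossDefect (j / 2) (weylCoord b l) + crossDefect (-(j / 2)) (weylCoord b l)) = 0 := by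
  have hb : 0 < b := by have := abs_nonneg j; omega
  have hweight :
      ∑ l ∈ range b, (ghostWeight (weylCoord b l) + ghostWeight (-weylCoord b l)) = b - 1 := by
    rw [sum_add_distrib, sum_weylCoord_neg ghostWeight, sum_ghostWeight_weylCoord hb]
    ring
  simp only [crossDefect_add_crossDefect_neg, sum_sub_distrib, sum_add_distrib, ← mul_sum,
    hweight]
  have hshift (u : ℚ) : ∑ l ∈ range b, symmGhostCharge (weylCoord b l - u) =
      shiftedChargeSum b (-u) := by simp only [shiftedChargeSum, sub_eq_add_neg]
  have hzero : ∑ l ∈ range b, symmGhostCharge (weylCoord b l) = shiftedChargeSum b 0 := by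
    simp only [shiftedChargeSum, add_zero]
  rw [hshift, hzero, ← shiftedChargeSum, shiftedChargeSum_neg, shiftedChargeSum_intCast_half b j hj]
  ring

theorem sum_sum_crossDefect_weylCoord {a b : ℕ} (hab : a ≤ b) :
    ∑ k ∈ range a, ∑ l ∈ range b, crossDefect (weylCoord a k) (weylCoord b l) = 0 := by
  set row := fun u => ∑ l ∈ range b, crossDefect u (weylCoord b l)
  have hrow : ∀ k ∈ range a, row (weylCoord a k) + row (-weylCoord a k) = 0 := by
    intro k hk
    have hk := mem_range.mp hk
    have hweyl : weylCoord a k = ((a - 1 - 2 * k : ℤ) : ℚ) / 2 := by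
      simp only [weylCoord]; push_cast; ring
    rw [hweyl, ← sum_crossDefect_add_crossDefect_neg b (a - 1 - 2 * k)
      (by rw [abs_lt]; constructor <;> omega), sum_add_distrib]
  have hsum := sum_eq_zero hrow
  rw [sum_add_distrib, sum_weylCoord_neg row] at hsum
  linarith

section Blocks

variable {ι : Type*} [LinearOrder ι]

def stageDefect (i j : ι) (u v : ℚ) : ℚ :=
  (ghostWeight (u - v) -
      ghostWeight ((if i = max i j then u else 0) - (if j = max i j then v else 0))) *
    ghostCharge (u - v)

theorem stageDefect_self (i : ι) (u v : ℚ) : stageDefect i i u v = 0 := by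
  simp [stageDefect]

theorem stageDefect_add_stageDefect_of_lt {i j : ι} (hij : i < j) (u v : ℚ) :
    stageDefect i j u v + stageDefect j i v u = crossDefect u v := by
  simp [stageDefect, crossDefect, max_eq_right hij.le, max_eq_left hij.le, hij.ne]

def blockPairDefect (lam : ι → ℕ) (i j : ι) : ℚ :=
  ∑ t ∈ range (lam i), ∑ s ∈ range (lam j),
    stageDefect i j (weylCoord (lam i) t) (weylCoord (lam j) s)

theorem blockPairDefect_add_swap_of_lt {lam : ι → ℕ} {i j : ι} (hij : i < j)
    (hle : lam i ≤ lam j) :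
    blockPairDefect lam i j + blockPairDefect lam j i = 0 := by
  rw [blockPairDefect, blockPairDefect, sum_comm (s := range (lam j)), ← sum_add_distrib]
  simp only [← sum_add_distrib, stageDefect_add_stageDefect_of_lt hij]
  exact sum_sum_crossDefect_weylCoord hle

theorem blockPairDefect_add_swap {lam : ι → ℕ} (hmono : Monotone lam) (i j : ι) :
    blockPairDefect lam i j + blockPairDefect lam j i = 0 := by
  rcases lt_trichotomy i j with hij | rfl | hji
  · exact blockPairDefect_add_swap_of_lt hij (hmono hij.le)
  · simp [blockPairDefect, stageDefect_self]
  · rw [add_comm]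
    exact blockPairDefect_add_swap_of_lt hji (hmono hji.le)

variable [LocallyFiniteOrderBot ι]

def blockStart (lam : ι → ℕ) (i : ι) : ℕ := ∑ j ∈ Iio i, lam j

theorem blockStart_add_eq_sum_Iic (lam : ι → ℕ) (i : ι) :
    blockStart lam i + lam i = ∑ j ∈ Iic i, lam j := by
  rw [blockStart, ← Iio_insert, sum_insert notMem_Iio_self, add_comm]

theorem blockStart_add_le_of_lt (lam : ι → ℕ) {i j : ι} (hij : i < j) :
    blockStart lam i + lam i ≤ blockStart lam j := by
  rw [blockStart_add_eq_sum_Iic]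
  exact sum_le_sum_of_subset fun k hk => mem_Iio.mpr ((mem_Iic.mp hk).trans_lt hij)

theorem eq_of_mem_block (lam : ι → ℕ) {i j : ι} {p : ℕ}
    (hi : blockStart lam i < p ∧ p ≤ blockStart lam i + lam i)
    (hj : blockStart lam j < p ∧ p ≤ blockStart lam j + lam j) : i = j := by
  by_contra hne
  rcases lt_or_gt_of_ne hne with hij | hji
  · have := blockStart_add_le_of_lt lam hij; omega
  · have := blockStart_add_le_of_lt lam hji; omega

variable [Fintype ι]

theorem blockStart_add_le_sum (lam : ι → ℕ) (i : ι) : blockStart lam i + lam i ≤ ∑ j, lam j := by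
  rw [blockStart_add_eq_sum_Iic]
  exact sum_le_sum_of_subset (subset_univ _)

theorem sum_Icc_eq_sum_blocks {M : Type*} [AddCommMonoid M] (lam : ι → ℕ) (h : ℕ → M) :
    ∑ p ∈ Icc 1 (∑ i, lam i), h p =
      ∑ i, ∑ t ∈ range (lam i), h (blockStart lam i + 1 + t) := by
  set pos : (Σ _ : ι, ℕ) → ℕ := fun it => blockStart lam it.1 + 1 + it.2
  have hinj : Set.InjOn pos (univ.sigma fun i => range (lam i)) := by
    rintro ⟨i, t⟩ hit ⟨j, s⟩ hjs heq
    simp only [coe_sigma, Set.mem_sigma_iff, coe_univ, Set.mem_univ, coe_range, Set.mem_Iio,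
      true_and, pos] at hit hjs heq
    obtain rfl : i = j := eq_of_mem_block lam (p := blockStart lam i + 1 + t)
      ⟨by omega, by omega⟩ ⟨by omega, by omega⟩
    obtain rfl : t = s := by omega
    rfl
  have himage : (univ.sigma fun i => range (lam i)).image pos = Icc 1 (∑ i, lam i) := by
    refine eq_of_subset_of_card_le (fun p hp => ?_) ?_
    · obtain ⟨⟨i, t⟩, hit, rfl⟩ := mem_image.mp hp
      have := blockStart_add_le_sum lam i
      simp only [mem_sigma, mem_univ, mem_range, true_and] at hit
      simp only [pos]
      exact mem_Icc.mpr ⟨by omega, by omega⟩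
    · rw [card_image_of_injOn hinj, card_sigma]
      simp
  rw [← himage, sum_image hinj, sum_sigma]

theorem sum_Icc_eq_sum_weylCoord {M : Type*} [AddCommMonoid M] {lam : ι → ℕ} {b : ℕ → ι}
    {x : ℕ → ℚ}
    (hb : ∀ p, 1 ≤ p → p ≤ ∑ i, lam i →
      blockStart lam (b p) < p ∧ p ≤ blockStart lam (b p) + lam (b p))
    (hx : ∀ p, x p = ((lam (b p) : ℚ) + 1) / 2 - ((p - blockStart lam (b p) : ℕ) : ℚ))
    (φ : ι → ℚ → M) :
    ∑ p ∈ Icc 1 (∑ i, lam i), φ (b p) (x p) =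
      ∑ i, ∑ t ∈ range (lam i), φ i (weylCoord (lam i) t) := by
  rw [sum_Icc_eq_sum_blocks]
  refine sum_congr rfl fun i _ => sum_congr rfl fun t ht => ?_
  have ht := mem_range.mp ht
  have hbi : b (blockStart lam i + 1 + t) = i := eq_of_mem_block lam
    (hb _ (by omega) (by have := blockStart_add_le_sum lam i; omega)) ⟨by omega, by omega⟩
  rw [hx, hbi, weylCoord, show blockStart lam i + 1 + t - blockStart lam i = t + 1 by omega]
  push_cast
  congr 1
  ring

end Blocks

theorem partition_central_charge_identity_general (n : ℕ) (lam : Fin n → ℕ)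
    (hmono : Monotone lam)
    (N : ℕ) (hN : N = ∑ i, lam i)
    (μ : Fin n → ℕ) (hμ : ∀ i, μ i = ∑ j ∈ Finset.Iio i, lam j)
    (b : ℕ → Fin n)
    (hb : ∀ p, 1 ≤ p → p ≤ N → μ (b p) < p ∧ p ≤ μ (b p) + lam (b p))
    (r : ℕ → ℕ) (hr : ∀ p, r p = p - μ (b p))
    (x : ℕ → ℚ) (hx : ∀ p, x p = ((lam (b p) : ℚ) + 1) / 2 - (r p : ℚ))
    (γ : ℕ × ℕ → ℚ) (hγ : ∀ pq, γ pq = x pq.1 - x pq.2)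
    (γd : ℕ × ℕ → ℚ)
    (hγd : ∀ pq, γd pq =
      (if b pq.1 = max (b pq.1) (b pq.2) then x pq.1 else 0)
        - (if b pq.2 = max (b pq.1) (b pq.2) then x pq.2 else 0))
    (c : ℚ → ℚ) (hc : ∀ t, c t = 12 * t * (t - 1) + 2) :
    (∑ pq ∈ (Finset.Icc 1 N).offDiag.filter (fun pq => 0 < γ pq), c (γ pq))
      - (1/2) * ∑ pq ∈ (Finset.Icc 1 N).offDiag.filter (fun pq => γ pq = 1/2), c (γ pq)
    = (∑ pq ∈ (Finset.Icc 1 N).offDiag.filter (fun pq => 0 < γd pq), c (γ pq))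
      - (1/2) * ∑ pq ∈ (Finset.Icc 1 N).offDiag.filter (fun pq => γd pq = 1/2), c (γ pq) := by
  obtain rfl : μ = blockStart lam := funext hμ
  subst hN
  have hsum := sum_Icc_eq_sum_weylCoord (M := ℚ) (x := x) hb fun p => by rw [hx, hr]
  have hterm (pq : ℕ × ℕ) : ghostWeight (γ pq) * c (γ pq) - ghostWeight (γd pq) * c (γ pq) =
      stageDefect (b pq.1) (b pq.2) (x pq.1) (x pq.2) := by
    rw [← sub_mul, hγd, hγ, hc]
    rfl
  rw [← sum_ghostWeight_mul, ← sum_ghostWeight_mul, ← sub_eq_zero, ← sum_sub_distrib]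
  simp only [hterm]
  rw [sum_offDiag_eq_sum_product _ fun p => stageDefect_self _ _ _, sum_product]
  calc _ = ∑ p ∈ Icc 1 (∑ i, lam i), ∑ j, ∑ s ∈ range (lam j),
        stageDefect (b p) j (x p) (weylCoord (lam j) s) :=
        sum_congr rfl fun p _ => hsum fun j v => stageDefect (b p) j (x p) v
    _ = ∑ i, ∑ t ∈ range (lam i), ∑ j, ∑ s ∈ range (lam j),
        stageDefect i j (weylCoord (lam i) t) (weylCoord (lam j) s) :=
        hsum fun i u => ∑ j, ∑ s ∈ range (lam j), stageDefect i j u (weylCoord (lam j) s)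
    _ = ∑ i, ∑ j, blockPairDefect lam i j := sum_congr rfl fun i _ => sum_comm
    _ = 0 := sum_sum_eq_zero_of_add_swap _ (blockPairDefect_add_swap hmono)

/-- Equality of the total ghost central charges for the one-step quantum
Hamiltonian reduction and the reduction by stages, for a partition `λ₁ ≤ … ≤ λₙ` of `N`,
where `c[t] = 12t(t-1) + 2`. -/
theorem partition_central_charge_identity (n : ℕ) (lam : Fin n → ℕ)
    (hmono : Monotone lam) (hpos : ∀ i, 0 < lam i)
    (N : ℕ) (hN : N = ∑ i, lam i)
    (μ : Fin n → ℕ) (hμ : ∀ i, μ i = ∑ j ∈ Finset.Iio i, lam j)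
    (b : ℕ → Fin n)
    (hb : ∀ p, 1 ≤ p → p ≤ N → μ (b p) < p ∧ p ≤ μ (b p) + lam (b p))
    (r : ℕ → ℕ) (hr : ∀ p, r p = p - μ (b p))
    (x : ℕ → ℚ) (hx : ∀ p, x p = ((lam (b p) : ℚ) + 1) / 2 - (r p : ℚ))
    (γ : ℕ × ℕ → ℚ) (hγ : ∀ pq, γ pq = x pq.1 - x pq.2)
    (γd : ℕ × ℕ → ℚ)
    (hγd : ∀ pq, γd pq =
      (if b pq.1 = max (b pq.1) (b pq.2) then x pq.1 else 0)
        - (if b pq.2 = max (b pq.1) (b pq.2) then x pq.2 else 0))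
    (c : ℚ → ℚ) (hc : ∀ t, c t = 12 * t * (t - 1) + 2) :
    (∑ pq ∈ (Finset.Icc 1 N).offDiag.filter (fun pq => 0 < γ pq), c (γ pq))
      - (1/2) * ∑ pq ∈ (Finset.Icc 1 N).offDiag.filter (fun pq => γ pq = 1/2), c (γ pq)
    = (∑ pq ∈ (Finset.Icc 1 N).offDiag.filter (fun pq => 0 < γd pq), c (γ pq))
      - (1/2) * ∑ pq ∈ (Finset.Icc 1 N).offDiag.filter (fun pq => γd pq = 1/2), c (γ pq) :=
  partition_central_charge_identity_general n lam hmono N hN μ hμ b hb r hr x hx γ hγ γd hγd c hc
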